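/- arXiv:2308.03779 — 6 statements merged into one kernel-verified Lean document; each statement's English description precedes it below -/
import Mathlib

section
/- Let E be a real Banach space, P ⊆ E a cone with nonempty interior, and (X, d) an extended cone b-metric space over P. A subset U ⊆ X is sequentially open (i.e., for every x ∈ U and every sequence (xₙ) in X converging to x there exists N ∈ ℕ such that xₙ ∈ U for all n > N) if and only if for every x ∈ U there exists u ∈ E with 0 ≪ u such that B(x, u) ⊆ U. In other words, the sequential topology on X coincides with the topology generated by the open balls. -/
/-!
A ball `B(x, u)` is a sequential neighbourhood of `x` because `d(xₙ, x) ≪ u` for large `n` whenever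
`xₙ → x`. Conversely, if no ball `B(x, u)` lies in `U`, pick `xₙ ∈ B(x, u₀ / (n + 1)) \ U` for a fixed
`u₀ ≫ 0`; since `u₀ / (n + 1) → 0`, every `u ≫ 0` eventually satisfies `u₀ / (n + 1) ≤ u`, so
`d(xₙ, x) ≪ u₀ / (n + 1) ≤ u` (as `int P + P ⊆ int P`), and `xₙ → x` never enters `U`.
-/

open Filter Topology Pointwise

section ConeInterior

variable {E : Type*} [AddCommGroup E] [TopologicalSpace E] {P : Set E}

theorem add_mem_interior_of_mem [IsTopologicalAddGroup E]
    (hadd : ∀ x ∈ P, ∀ y ∈ P, x + y ∈ P) {u p : E} (hu : u ∈ interior P) (hp : p ∈ P) :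
    u + p ∈ interior P :=
  interior_maximal (by rintro _ ⟨a, ha, b, hb, rfl⟩; exact hadd a (interior_subset ha) b hb)
    (isOpen_interior.add_right) ⟨u, hu, p, hp, rfl⟩

theorem smul_mem_interior_of_pos [Module ℝ E] [ContinuousConstSMul ℝ E]
    (hsmul : ∀ c : ℝ, 0 ≤ c → ∀ x ∈ P, c • x ∈ P) {c : ℝ} (hc : 0 < c) {u : E}
    (hu : u ∈ interior P) : c • u ∈ interior P := by
  have hcP : c • P ⊆ P := by
    rintro _ ⟨x, hx, rfl⟩
    exact hsmul c hc.le x hx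
  exact interior_mono hcP ((interior_smul₀ hc.ne' P).symm ▸ Set.smul_mem_smul_set hu)

end ConeInterior

section ConeMetric

variable {E : Type*} [AddCommGroup E] [TopologicalSpace E] {X : Type*} (P : Set E) (d : X → X → E)

def ConeTendsto (xs : ℕ → X) (x : X) : Prop :=
  ∀ u ∈ interior P, ∃ M : ℕ, ∀ n ≥ M, u - d (xs n) x ∈ interior P

def coneBall (x : X) (u : E) : Set X :=
  {y | u - d x y ∈ interior P}

variable {P d}

theorem ConeTendsto.eventually_mem_coneBall (hd_symm : ∀ x y, d x y = d y x) {xs : ℕ → X}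
    {x : X} (hxs : ConeTendsto P d xs x) {u : E} (hu : u ∈ interior P) :
    ∃ M : ℕ, ∀ n ≥ M, xs n ∈ coneBall P d x u := by
  obtain ⟨M, hM⟩ := hxs u hu
  exact ⟨M, fun n hn => by
    show u - d x (xs n) ∈ interior P
    rw [hd_symm]
    exact hM n hn⟩

theorem coneTendsto_of_mem_coneBall [IsTopologicalAddGroup E] [Module ℝ E] [ContinuousSMul ℝ E]
    (hadd : ∀ x ∈ P, ∀ y ∈ P, x + y ∈ P) (hd_symm : ∀ x y, d x y = d y x) (u₀ : E)
    {xs : ℕ → X} {x : X} (hxs : ∀ n : ℕ, xs n ∈ coneBall P d x ((1 / ((n : ℝ) + 1)) • u₀)) :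
    ConeTendsto P d xs x := by
  intro u hu
  have hlim : Tendsto (fun n : ℕ => u - (1 / ((n : ℝ) + 1)) • u₀) atTop (𝓝 u) := by
    simpa using tendsto_const_nhds.sub
      ((tendsto_one_div_add_atTop_nhds_zero_nat (𝕜 := ℝ)).smul_const u₀)
  obtain ⟨M, hM⟩ := eventually_atTop.1 (hlim.eventually (mem_interior_iff_mem_nhds.1 hu))
  refine ⟨M, fun n hn => ?_⟩
  have hsum := add_mem_interior_of_mem hadd (hxs n) (hM n hn)
  rwa [hd_symm, sub_add_sub_cancel'] at hsum

end ConeMetric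

theorem stmt_1_general
    {E : Type*} [NormedAddCommGroup E] [NormedSpace ℝ E]
    {X : Type*}
    (P : Set E)
    (hP_conv : ∀ (a b : ℝ), 0 ≤ a → 0 ≤ b → ∀ x ∈ P, ∀ y ∈ P, a • x + b • y ∈ P)
    (hP_int : (interior P).Nonempty)
    (d : X → X → E)
    (hd_symm : ∀ x y, d x y = d y x)
    (U : Set X) :
    (∀ x ∈ U, ∀ xs : ℕ → X,
        (∀ u ∈ interior P, ∃ M : ℕ, ∀ n ≥ M, u - d (xs n) x ∈ interior P) →
        ∃ N : ℕ, ∀ n > N, xs n ∈ U)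
      ↔ ∀ x ∈ U, ∃ u : E, u ∈ interior P ∧ {y : X | u - d x y ∈ interior P} ⊆ U := by
  have hadd : ∀ x ∈ P, ∀ y ∈ P, x + y ∈ P := fun x hx y hy => by
    simpa using hP_conv 1 1 zero_le_one zero_le_one x hx y hy
  have hsmul : ∀ c : ℝ, 0 ≤ c → ∀ x ∈ P, c • x ∈ P := fun c hc x hx => by
    simpa using hP_conv c 0 hc le_rfl x hx x hx
  constructor
  · intro hseq x hx
    by_contra! hnot
    obtain ⟨u₀, hu₀⟩ := hP_int
    have hball : ∀ n : ℕ, ¬ coneBall P d x ((1 / ((n : ℝ) + 1)) • u₀) ⊆ U := fun n =>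
      hnot _ (smul_mem_interior_of_pos hsmul (by positivity) hu₀)
    choose xs hxs_ball hxs_notMem using fun n => Set.not_subset.1 (hball n)
    obtain ⟨N, hN⟩ := hseq x hx xs (coneTendsto_of_mem_coneBall hadd hd_symm u₀ hxs_ball)
    exact hxs_notMem (N + 1) (hN (N + 1) N.lt_succ_self)
  · intro hball x hx xs hxs
    obtain ⟨u, hu, hsub⟩ := hball x hx
    obtain ⟨M, hM⟩ := ConeTendsto.eventually_mem_coneBall hd_symm hxs hu
    exact ⟨M, fun n hn => hsub (hM n hn.le)⟩

theorem stmt_1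
    {E : Type*} [NormedAddCommGroup E] [NormedSpace ℝ E] [CompleteSpace E]
    {X : Type*} [Nonempty X]
    (P : Set E)
    (hP_ne : P.Nonempty) (hP_closed : IsClosed P) (hP_nontrivial : P ≠ ({0} : Set E))
    (hP_conv : ∀ (a b : ℝ), 0 ≤ a → 0 ≤ b → ∀ x ∈ P, ∀ y ∈ P, a • x + b • y ∈ P)
    (hP_pointed : ∀ x ∈ P, -x ∈ P → x = (0 : E))
    (hP_int : (interior P).Nonempty)
    (Θ : X → X → X → ℝ) (hΘ : ∀ x y z, 1 ≤ Θ x y z)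
    (d : X → X → E)
    (hd_nonneg : ∀ x y, d x y ∈ P)
    (hd_eq_zero : ∀ x y, d x y = 0 ↔ x = y)
    (hd_symm : ∀ x y, d x y = d y x)
    (hd_triangle : ∀ x y z, Θ x y z • (d x y + d y z) - d x z ∈ P)
    (U : Set X) :
    (∀ x ∈ U, ∀ xs : ℕ → X,
        (∀ u ∈ interior P, ∃ M : ℕ, ∀ n ≥ M, u - d (xs n) x ∈ interior P) →
        ∃ N : ℕ, ∀ n > N, xs n ∈ U)
      ↔ ∀ x ∈ U, ∃ u : E, u ∈ interior P ∧ {y : X | u - d x y ∈ interior P} ⊆ U :=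
  stmt_1_general P hP_conv hP_int d hd_symm U
end

section
/- Let E be a real Banach space, P ⊆ E a cone with nonempty interior, and (X, d) an extended cone b-metric space over P. Let f : X → X satisfy d(f(x), f(y)) ≤ s·[d(x, f(x)) + d(y, f(y))] + t·d(y, f(x)) for all x, y ∈ X, where s ∈ (0, 1/2) and t ∈ [0, 1). Then for every x₀ ∈ X, the Picard iterates xₙ = fⁿ(x₀) satisfy d(xₙ, xₙ₊₁) ≤ (s/(1 − s))ⁿ·d(x₀, x₁) for all n ≥ 0. -/
/-!
Putting `y = f x` in the contractive condition kills the `t`-term, since `d (f x) (f x) = 0`,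
and leaves `d (f x) (f² x) ≤ s • (d x (f x) + d (f x) (f² x))` in the cone order.
Solving for `d (f x) (f² x)` gives the ratio `s / (1 - s)`, and iterating gives the bound.
-/

namespace PointedCone

variable {E : Type*} [AddCommGroup E] [Module ℝ E] (C : PointedCone ℝ E)

lemma div_one_sub_smul_sub_mem_of_smul_add_sub_mem {s : ℝ} (hs : s < 1) {a b : E}
    (h : s • (a + b) - b ∈ C) : (s / (1 - s)) • a - b ∈ C := by
  have hs' : 1 - s ≠ 0 := by linarith
  convert C.smul_mem (inv_nonneg.2 (sub_nonneg.2 hs.le)) h using 1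
  match_scalars <;> field_simp; ring

lemma pow_smul_sub_mem_of_forall_smul_sub_mem {q : ℝ} (hq : 0 ≤ q) {u : ℕ → E}
    (hu : ∀ n, q • u n - u (n + 1) ∈ C) (n : ℕ) : q ^ n • u 0 - u n ∈ C := by
  induction n with
  | zero => simp
  | succ n ih =>
    convert C.add_mem (C.smul_mem hq ih) (hu n) using 1
    rw [pow_succ']
    module

end PointedCone

theorem stmt_6_general
    {E : Type*} [NormedAddCommGroup E] [NormedSpace ℝ E]
    {X : Type*}
    (P : Set E)
    (hP_ne : P.Nonempty)
    (hP_conv : ∀ (a b : ℝ), 0 ≤ a → 0 ≤ b → ∀ x ∈ P, ∀ y ∈ P, a • x + b • y ∈ P)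
    (d : X → X → E)
    (hd_eq_zero : ∀ x y, d x y = 0 ↔ x = y)
    (f : X → X) (s t : ℝ) (hs0 : 0 < s) (hs1 : s < 1 / 2)
    (hf : ∀ x y : X, s • (d x (f x) + d y (f y)) + t • d y (f x) - d (f x) (f y) ∈ P)
 :
    ∀ (x₀ : X) (n : ℕ),
      (s / (1 - s)) ^ n • d x₀ (f x₀) - d (f^[n] x₀) (f^[n + 1] x₀) ∈ P := by
  intro x₀ n
  let C : PointedCone ℝ E :=
    .ofConeComb P hP_ne fun x hx y hy a ha b hb => hP_conv a b ha hb x hx y hy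
  have hstep (x : X) : (s / (1 - s)) • d x (f x) - d (f x) (f (f x)) ∈ C := by
    refine C.div_one_sub_smul_sub_mem_of_smul_add_sub_mem (by linarith) ?_
    have h := hf x (f x)
    rw [(hd_eq_zero _ _).2 rfl, smul_zero, add_zero] at h
    exact h
  exact C.pow_smul_sub_mem_of_forall_smul_sub_mem (div_nonneg hs0.le (by linarith))
    (u := fun k => d (f^[k] x₀) (f^[k + 1] x₀))
    (fun k => by simpa [Function.iterate_succ_apply'] using hstep (f^[k] x₀)) n

theorem stmt_6
    {E : Type*} [NormedAddCommGroup E] [NormedSpace ℝ E] [CompleteSpace E]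
    {X : Type*} [Nonempty X]
    (P : Set E)
    (hP_ne : P.Nonempty) (hP_closed : IsClosed P) (hP_nontrivial : P ≠ ({0} : Set E))
    (hP_conv : ∀ (a b : ℝ), 0 ≤ a → 0 ≤ b → ∀ x ∈ P, ∀ y ∈ P, a • x + b • y ∈ P)
    (hP_pointed : ∀ x ∈ P, -x ∈ P → x = (0 : E))
    (hP_int : (interior P).Nonempty)
    (Θ : X → X → X → ℝ) (hΘ : ∀ x y z, 1 ≤ Θ x y z)
    (d : X → X → E)
    (hd_nonneg : ∀ x y, d x y ∈ P)
    (hd_eq_zero : ∀ x y, d x y = 0 ↔ x = y)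
    (hd_symm : ∀ x y, d x y = d y x)
    (hd_triangle : ∀ x y z, Θ x y z • (d x y + d y z) - d x z ∈ P)
    (f : X → X) (s t : ℝ) (hs0 : 0 < s) (hs1 : s < 1 / 2) (ht0 : 0 ≤ t) (ht1 : t < 1)
    (hf : ∀ x y : X, s • (d x (f x) + d y (f y)) + t • d y (f x) - d (f x) (f y) ∈ P)
 :
    ∀ (x₀ : X) (n : ℕ),
      (s / (1 - s)) ^ n • d x₀ (f x₀) - d (f^[n] x₀) (f^[n + 1] x₀) ∈ P :=
  stmt_6_general P hP_ne hP_conv d hd_eq_zero f s t hs0 hs1 hf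
end

section
/- Let E be a real Banach space, P ⊆ E a cone with nonempty interior, and (X, d) an extended cone b-metric space over P. Let f : X → X satisfy d(f(x), f(y)) ≤ s·[d(x, f(x)) + d(y, f(y))] + t·d(y, f(x)) for all x, y ∈ X, where s ∈ (0, 1/2) and t ∈ [0, 1). If u and v are fixed points of f (f(u) = u and f(v) = v), then u = v. -/
/-!
At fixed points `u`, `v` the contractive condition collapses to `d u v ≤ t • d u v`, i.e.
`(1 - t) • d u v ≤ 0`; as `d u v ≥ 0`, `t < 1` and the cone is pointed, `d u v = 0`.
-/

theorem eq_zero_of_mem_of_smul_sub_self_mem {E : Type*} [AddCommGroup E] [Module ℝ E]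
    {P : Set E} (hP_smul : ∀ c : ℝ, 0 ≤ c → ∀ x ∈ P, c • x ∈ P)
    (hP_pointed : ∀ x ∈ P, -x ∈ P → x = 0)
    {x : E} (hx : x ∈ P) {t : ℝ} (ht : t < 1) (hle : t • x - x ∈ P) : x = 0 := by
  have hpos : (1 - t) • x ∈ P := hP_smul (1 - t) (by linarith) x hx
  have hneg : -((1 - t) • x) ∈ P := by
    convert hle using 1
    module
  have hzero : (1 - t) • x = 0 := hP_pointed _ hpos hneg
  exact (smul_eq_zero.1 hzero).resolve_left (by linarith)

theorem stmt_7_general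
    {E : Type*} [NormedAddCommGroup E] [NormedSpace ℝ E]
    {X : Type*}
    (P : Set E)
    (hP_conv : ∀ (a b : ℝ), 0 ≤ a → 0 ≤ b → ∀ x ∈ P, ∀ y ∈ P, a • x + b • y ∈ P)
    (hP_pointed : ∀ x ∈ P, -x ∈ P → x = (0 : E))
    (d : X → X → E)
    (hd_nonneg : ∀ x y, d x y ∈ P)
    (hd_eq_zero : ∀ x y, d x y = 0 ↔ x = y)
    (hd_symm : ∀ x y, d x y = d y x)
    (f : X → X) (s t : ℝ) (ht1 : t < 1)
    (hf : ∀ x y : X, s • (d x (f x) + d y (f y)) + t • d y (f x) - d (f x) (f y) ∈ P)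
 :
    ∀ u v : X, f u = u → f v = v → u = v := by
  intro u v hu hv
  have hP_smul : ∀ c : ℝ, 0 ≤ c → ∀ x ∈ P, c • x ∈ P := fun c hc x hx => by
    simpa using hP_conv c 0 hc le_rfl x hx x hx
  have hdiag : ∀ x, d x x = 0 := fun x => (hd_eq_zero x x).2 rfl
  have hle : t • d u v - d u v ∈ P := by
    have h := hf u v
    rwa [hu, hv, hdiag, hdiag, add_zero, smul_zero, zero_add, hd_symm v u] at h
  exact (hd_eq_zero u v).1
    (eq_zero_of_mem_of_smul_sub_self_mem hP_smul hP_pointed (hd_nonneg u v) ht1 hle)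

theorem stmt_7
    {E : Type*} [NormedAddCommGroup E] [NormedSpace ℝ E] [CompleteSpace E]
    {X : Type*} [Nonempty X]
    (P : Set E)
    (hP_ne : P.Nonempty) (hP_closed : IsClosed P) (hP_nontrivial : P ≠ ({0} : Set E))
    (hP_conv : ∀ (a b : ℝ), 0 ≤ a → 0 ≤ b → ∀ x ∈ P, ∀ y ∈ P, a • x + b • y ∈ P)
    (hP_pointed : ∀ x ∈ P, -x ∈ P → x = (0 : E))
    (hP_int : (interior P).Nonempty)
    (Θ : X → X → X → ℝ) (hΘ : ∀ x y z, 1 ≤ Θ x y z)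
    (d : X → X → E)
    (hd_nonneg : ∀ x y, d x y ∈ P)
    (hd_eq_zero : ∀ x y, d x y = 0 ↔ x = y)
    (hd_symm : ∀ x y, d x y = d y x)
    (hd_triangle : ∀ x y z, Θ x y z • (d x y + d y z) - d x z ∈ P)
    (f : X → X) (s t : ℝ) (hs0 : 0 < s) (hs1 : s < 1 / 2) (ht0 : 0 ≤ t) (ht1 : t < 1)
    (hf : ∀ x y : X, s • (d x (f x) + d y (f y)) + t • d y (f x) - d (f x) (f y) ∈ P)
 :
    ∀ u v : X, f u = u → f v = v → u = v :=
  stmt_7_general P hP_conv hP_pointed d hd_nonneg hd_eq_zero hd_symm f s t ht1 hf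
end

section
/- Let E be a real Banach space, P ⊆ E a cone with nonempty interior, and (X, d) an extended cone b-metric space over P. Let f : X → X satisfy d(f(x), f(y)) ≤ β·d(x, f(x)) + γ·d(y, f(y)) + δ·d(x, y) + t·d(x, f(y)) for all x, y ∈ X, where β, γ, δ, t ≥ 0 and β + γ + δ + t < 1. Set q = (γ + δ)/(1 − β). Then for every x₀ ∈ X, the Picard iterates xₙ = fⁿ(x₀) satisfy d(xₙ₊₁, xₙ) ≤ qⁿ·d(x₁, x₀) for all n ≥ 0. -/
open Filter Topology

namespace PointedCone

variable {E : Type*} [AddCommGroup E] [Module ℝ E] (C : PointedCone ℝ E)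

theorem smul_pow_sub_mem_of_smul_sub_succ_mem {u : ℕ → E} {q : ℝ} (hq : 0 ≤ q)
    (hu : ∀ n, q • u n - u (n + 1) ∈ C) (n : ℕ) : q ^ n • u 0 - u n ∈ C := by
  induction n with
  | zero => simp
  | succ n ih =>
    have h : q ^ (n + 1) • u 0 - u (n + 1) = q • (q ^ n • u 0 - u n) + (q • u n - u (n + 1)) := by
      rw [smul_sub, smul_smul, ← pow_succ']
      abel
    rw [h]
    exact C.add_mem (C.smul_mem hq ih) (hu n)

theorem inv_smul_sub_mem_of_sub_smul_mem {c : ℝ} (hc : 0 < c) {a b : E}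
    (h : a - c • b ∈ C) : c⁻¹ • a - b ∈ C := by
  have h' := C.smul_mem (inv_nonneg.mpr hc.le) h
  rwa [smul_sub, smul_smul, inv_mul_cancel₀ hc.ne', one_smul] at h'

/-- Taking `y = x` and `x = f x` in the contractive condition kills the `t`-term, since
`d (f x) (f x) = 0`, and leaves `(1 - β) d(f²x, f x) ≤ (γ + δ) d(f x, x)`. -/
theorem smul_dist_sub_dist_map_mem {X : Type*} (d : X → X → E) (hd_self : ∀ x, d x x = 0)
    (hd_symm : ∀ x y, d x y = d y x) (f : X → X) {β γ δ t : ℝ} (hβ : β < 1)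
    (hf : ∀ x y : X,
        β • d x (f x) + γ • d y (f y) + δ • d x y + t • d x (f y) - d (f x) (f y) ∈ C)
    (x : X) : ((γ + δ) / (1 - β)) • d (f x) x - d (f (f x)) (f x) ∈ C := by
  have h := hf (f x) x
  rw [hd_self, smul_zero, add_zero, hd_symm x, hd_symm (f x) (f (f x))] at h
  have h' : (γ + δ) • d (f x) x - (1 - β) • d (f (f x)) (f x) ∈ C := by
    convert h using 1
    module
  rw [div_eq_inv_mul, mul_smul]
  exact C.inv_smul_sub_mem_of_sub_smul_mem (sub_pos.mpr hβ) h'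

end PointedCone

theorem stmt_11_general
    {E : Type*} [NormedAddCommGroup E] [NormedSpace ℝ E]
    {X : Type*}
    (P : Set E)
    (hP_ne : P.Nonempty)
    (hP_conv : ∀ (a b : ℝ), 0 ≤ a → 0 ≤ b → ∀ x ∈ P, ∀ y ∈ P, a • x + b • y ∈ P)
    (d : X → X → E)
    (hd_eq_zero : ∀ x y, d x y = 0 ↔ x = y)
    (hd_symm : ∀ x y, d x y = d y x)
    (f : X → X) (β γ δ t : ℝ)
    (hγ : 0 ≤ γ) (hδ : 0 ≤ δ) (ht : 0 ≤ t)
    (hsum : β + γ + δ + t < 1)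
    (hf : ∀ x y : X,
        β • d x (f x) + γ • d y (f y) + δ • d x y + t • d x (f y) - d (f x) (f y) ∈ P)
 :
    ∀ (x₀ : X) (n : ℕ),
      ((γ + δ) / (1 - β)) ^ n • d (f x₀) x₀ - d (f^[n + 1] x₀) (f^[n] x₀) ∈ P := by
  intro x₀ n
  let C : PointedCone ℝ E := .ofConeComb P hP_ne fun x hx y hy a ha b hb ↦
    hP_conv a b ha hb x hx y hy
  have hβ : β < 1 := by linarith
  have hq : 0 ≤ (γ + δ) / (1 - β) := div_nonneg (by linarith) (by linarith)
  refine C.smul_pow_sub_mem_of_smul_sub_succ_mem (u := fun n ↦ d (f^[n + 1] x₀) (f^[n] x₀))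
    hq (fun n ↦ ?_) n
  simp only [Function.iterate_succ_apply']
  exact C.smul_dist_sub_dist_map_mem d (fun x ↦ (hd_eq_zero x x).mpr rfl) hd_symm f hβ hf _

theorem stmt_11
    {E : Type*} [NormedAddCommGroup E] [NormedSpace ℝ E] [CompleteSpace E]
    {X : Type*} [Nonempty X]
    (P : Set E)
    (hP_ne : P.Nonempty) (hP_closed : IsClosed P) (hP_nontrivial : P ≠ ({0} : Set E))
    (hP_conv : ∀ (a b : ℝ), 0 ≤ a → 0 ≤ b → ∀ x ∈ P, ∀ y ∈ P, a • x + b • y ∈ P)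
    (hP_pointed : ∀ x ∈ P, -x ∈ P → x = (0 : E))
    (hP_int : (interior P).Nonempty)
    (Θ : X → X → X → ℝ) (hΘ : ∀ x y z, 1 ≤ Θ x y z)
    (d : X → X → E)
    (hd_nonneg : ∀ x y, d x y ∈ P)
    (hd_eq_zero : ∀ x y, d x y = 0 ↔ x = y)
    (hd_symm : ∀ x y, d x y = d y x)
    (hd_triangle : ∀ x y z, Θ x y z • (d x y + d y z) - d x z ∈ P)
    (f : X → X) (β γ δ t : ℝ)
    (hβ : 0 ≤ β) (hγ : 0 ≤ γ) (hδ : 0 ≤ δ) (ht : 0 ≤ t)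
    (hsum : β + γ + δ + t < 1)
    (hf : ∀ x y : X,
        β • d x (f x) + γ • d y (f y) + δ • d x y + t • d x (f y) - d (f x) (f y) ∈ P)
 :
    ∀ (x₀ : X) (n : ℕ),
      ((γ + δ) / (1 - β)) ^ n • d (f x₀) x₀ - d (f^[n + 1] x₀) (f^[n] x₀) ∈ P :=
  stmt_11_general P hP_ne hP_conv d hd_eq_zero hd_symm f β γ δ t hγ hδ ht hsum hf
end

section
/- Let E be a real Banach space, P ⊆ E a cone with nonempty interior, and (X, d) an extended cone b-metric space over P. Let f : X → X be asymptotically regular and satisfy d(f(x), f(y)) ≤ s·[d(x, f(x)) + d(y, f(y))] for all x, y ∈ X, where s ≥ 0. Then for every x ∈ X, the sequence of iterates (fⁿ(x)) is a Cauchy sequence in (X, d). -/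
/-!
Write `yₙ = fⁿ(x)`. The contraction condition applied to `yₙ, yₘ` bounds `d(yₙ₊₁, yₘ₊₁)` in the
cone order by `s • (d(yₙ, yₙ₊₁) + d(yₘ, yₘ₊₁))`, which tends to `0` in norm by asymptotic
regularity. For `u ∈ int P`, the interior is a neighbourhood of `u`, so eventually
`u - majorant ∈ int P`; since `int P + P ⊆ int P`, so is `u - d(yₙ₊₁, yₘ₊₁)`.
-/

open Filter Topology

section Cone

variable {E : Type*} [AddCommGroup E] [TopologicalSpace E] [IsTopologicalAddGroup E]
  {P : Set E}

theorem add_mem_interior_of_add_mem (hadd : ∀ a ∈ P, ∀ b ∈ P, a + b ∈ P) {w p : E}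
    (hw : w ∈ interior P) (hp : p ∈ P) : w + p ∈ interior P :=
  interior_maximal (Set.add_subset_iff.mpr fun a ha b hb => hadd a (interior_subset ha) b hb)
    isOpen_interior.add_right (Set.add_mem_add hw hp)

theorem eventually_sub_mem_interior_of_le_tendsto_zero
    (hadd : ∀ a ∈ P, ∀ b ∈ P, a + b ∈ P) {ι : Type*} {l : Filter ι} {D w : ι → E}
    (hw : Tendsto w l (𝓝 0)) (hDw : ∀ᶠ i in l, w i - D i ∈ P) {u : E} (hu : u ∈ interior P) :
    ∀ᶠ i in l, u - D i ∈ interior P := by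
  have hsub : Tendsto (fun i => u - w i) l (𝓝 u) := by
    simpa using tendsto_const_nhds.sub hw
  filter_upwards [hsub.eventually (isOpen_interior.mem_nhds hu), hDw] with i hi hi'
  simpa using add_mem_interior_of_add_mem hadd hi hi'

end Cone

theorem tendsto_iterate_step_zero {X E : Type*} [NormedAddCommGroup E]
    {d : X → X → E} (hd_symm : ∀ x y, d x y = d y x) {f : X → X} {x : X}
    (hreg : Tendsto (fun n => ‖d (f^[n + 1] x) (f^[n] x)‖) atTop (𝓝 0)) :
    Tendsto (fun n => d (f^[n] x) (f (f^[n] x))) atTop (𝓝 0) := by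
  rw [tendsto_zero_iff_norm_tendsto_zero]
  refine hreg.congr fun n => ?_
  rw [hd_symm, Function.iterate_succ_apply']

theorem stmt_13_general
    {E : Type*} [NormedAddCommGroup E] [NormedSpace ℝ E]
    {X : Type*}
    (P : Set E)
    (hP_conv : ∀ (a b : ℝ), 0 ≤ a → 0 ≤ b → ∀ x ∈ P, ∀ y ∈ P, a • x + b • y ∈ P)
    (d : X → X → E)
    (hd_symm : ∀ x y, d x y = d y x)
    (f : X → X)
    (hreg : ∀ x : X,
        Tendsto (fun n => ‖d (f^[n + 1] x) (f^[n] x)‖) atTop (nhds 0))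
    (s : ℝ)
    (hf : ∀ x y : X, s • (d x (f x) + d y (f y)) - d (f x) (f y) ∈ P) :
    ∀ x : X, ∀ u ∈ interior P, ∃ M : ℕ, ∀ n ≥ M, ∀ m ≥ M,
      u - d (f^[n] x) (f^[m] x) ∈ interior P := by
  intro x u hu
  have hadd : ∀ a ∈ P, ∀ b ∈ P, a + b ∈ P := fun a ha b hb => by
    simpa using hP_conv 1 1 zero_le_one zero_le_one a ha b hb
  have hstep := tendsto_iterate_step_zero hd_symm (hreg x)
  have hmajorant : Tendsto (fun p : ℕ × ℕ => s • (d (f^[p.1] x) (f (f^[p.1] x)) +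
      d (f^[p.2] x) (f (f^[p.2] x)))) atTop (𝓝 0) := by
    rw [← prod_atTop_atTop_eq]
    simpa using ((hstep.comp tendsto_fst).add (hstep.comp tendsto_snd)).const_smul s
  obtain ⟨N, hN⟩ := eventually_atTop_prod_self'.mp <|
    eventually_sub_mem_interior_of_le_tendsto_zero hadd hmajorant
      (Eventually.of_forall fun p => hf _ _) hu
  refine ⟨N + 1, fun n hn m hm => ?_⟩
  obtain ⟨n, rfl⟩ : ∃ k, n = k + 1 := ⟨n - 1, by omega⟩
  obtain ⟨m, rfl⟩ : ∃ k, m = k + 1 := ⟨m - 1, by omega⟩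
  simpa only [Function.iterate_succ_apply'] using hN n (by omega) m (by omega)

theorem stmt_13
    {E : Type*} [NormedAddCommGroup E] [NormedSpace ℝ E] [CompleteSpace E]
    {X : Type*} [Nonempty X]
    (P : Set E)
    (hP_ne : P.Nonempty) (hP_closed : IsClosed P) (hP_nontrivial : P ≠ ({0} : Set E))
    (hP_conv : ∀ (a b : ℝ), 0 ≤ a → 0 ≤ b → ∀ x ∈ P, ∀ y ∈ P, a • x + b • y ∈ P)
    (hP_pointed : ∀ x ∈ P, -x ∈ P → x = (0 : E))
    (hP_int : (interior P).Nonempty)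
    (Θ : X → X → X → ℝ) (hΘ : ∀ x y z, 1 ≤ Θ x y z)
    (d : X → X → E)
    (hd_nonneg : ∀ x y, d x y ∈ P)
    (hd_eq_zero : ∀ x y, d x y = 0 ↔ x = y)
    (hd_symm : ∀ x y, d x y = d y x)
    (hd_triangle : ∀ x y z, Θ x y z • (d x y + d y z) - d x z ∈ P)
    (f : X → X)
    (hreg : ∀ x : X,
        Tendsto (fun n => ‖d (f^[n + 1] x) (f^[n] x)‖) atTop (nhds 0))
    (s : ℝ) (hs0 : 0 ≤ s)
    (hf : ∀ x y : X, s • (d x (f x) + d y (f y)) - d (f x) (f y) ∈ P) :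
    ∀ x : X, ∀ u ∈ interior P, ∃ M : ℕ, ∀ n ≥ M, ∀ m ≥ M,
      u - d (f^[n] x) (f^[m] x) ∈ interior P :=
  stmt_13_general P hP_conv d hd_symm f hreg s hf
end

section
/- Let E be a real Banach space, P ⊆ E a cone with nonempty interior, and (X, d) an extended cone b-metric space over P. Let f : X → X satisfy d(f(x), f(y)) ≤ s·[d(x, f(x)) + d(y, f(y))] + t·d(y, f(x)) for all x, y ∈ X, where s ∈ (0, 1/2) and t ∈ [0, 1). Then for every x ∈ X, setting u = f(x), one has d(u, f(u)) ≤ (s/(1 − s))·d(x, f(x)); that is, d(f(x), f(f(x))) ≤ (s/(1 − s))·d(x, f(x)) for all x ∈ X. -/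
open Filter Topology

section NonnegCombinations

variable {E : Type*} [AddCommGroup E] [Module ℝ E] {P : Set E}

lemma smul_mem_of_nonneg_combinations_mem
    (hP : ∀ (a b : ℝ), 0 ≤ a → 0 ≤ b → ∀ x ∈ P, ∀ y ∈ P, a • x + b • y ∈ P)
    {c : ℝ} (hc : 0 ≤ c) {x : E} (hx : x ∈ P) : c • x ∈ P := by
  simpa using hP c 0 hc le_rfl x hx x hx

lemma div_one_sub_smul_sub_mem_of_smul_add_sub_mem
    (hP_smul : ∀ c : ℝ, 0 ≤ c → ∀ x ∈ P, c • x ∈ P) {s : ℝ} (hs : s < 1) {a b : E}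
    (h : s • (a + b) - b ∈ P) : (s / (1 - s)) • a - b ∈ P := by
  have h1s : (1 - s) ≠ 0 := by linarith
  convert hP_smul (1 - s)⁻¹ (inv_nonneg.2 (by linarith)) _ h using 1
  match_scalars
  · field_simp
  · field_simp; ring

end NonnegCombinations

theorem stmt_16_general
    {E : Type*} [NormedAddCommGroup E] [NormedSpace ℝ E]
    {X : Type*}
    (P : Set E)
    (hP_conv : ∀ (a b : ℝ), 0 ≤ a → 0 ≤ b → ∀ x ∈ P, ∀ y ∈ P, a • x + b • y ∈ P)
    (d : X → X → E)
    (hd_eq_zero : ∀ x y, d x y = 0 ↔ x = y)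
    (f : X → X) (s t : ℝ) (hs1 : s < 1 / 2)
    (hf : ∀ x y : X, s • (d x (f x) + d y (f y)) + t • d y (f x) - d (f x) (f y) ∈ P)
 :
    ∀ x : X, (s / (1 - s)) • d x (f x) - d (f x) (f (f x)) ∈ P := by
  intro x
  have h := hf x (f x)
  rw [(hd_eq_zero _ _).2 rfl, smul_zero, add_zero] at h
  exact div_one_sub_smul_sub_mem_of_smul_add_sub_mem
    (fun _ hc _ hx ↦ smul_mem_of_nonneg_combinations_mem hP_conv hc hx) (by linarith) h

theorem stmt_16
    {E : Type*} [NormedAddCommGroup E] [NormedSpace ℝ E] [CompleteSpace E]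
    {X : Type*} [Nonempty X]
    (P : Set E)
    (hP_ne : P.Nonempty) (hP_closed : IsClosed P) (hP_nontrivial : P ≠ ({0} : Set E))
    (hP_conv : ∀ (a b : ℝ), 0 ≤ a → 0 ≤ b → ∀ x ∈ P, ∀ y ∈ P, a • x + b • y ∈ P)
    (hP_pointed : ∀ x ∈ P, -x ∈ P → x = (0 : E))
    (hP_int : (interior P).Nonempty)
    (Θ : X → X → X → ℝ) (hΘ : ∀ x y z, 1 ≤ Θ x y z)
    (d : X → X → E)
    (hd_nonneg : ∀ x y, d x y ∈ P)
    (hd_eq_zero : ∀ x y, d x y = 0 ↔ x = y)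
    (hd_symm : ∀ x y, d x y = d y x)
    (hd_triangle : ∀ x y z, Θ x y z • (d x y + d y z) - d x z ∈ P)
    (f : X → X) (s t : ℝ) (hs0 : 0 < s) (hs1 : s < 1 / 2) (ht0 : 0 ≤ t) (ht1 : t < 1)
    (hf : ∀ x y : X, s • (d x (f x) + d y (f y)) + t • d y (f x) - d (f x) (f y) ∈ P)
 :
    ∀ x : X, (s / (1 - s)) • d x (f x) - d (f x) (f (f x)) ∈ P :=
  stmt_16_general P hP_conv d hd_eq_zero f s t hs1 hf
end
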